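/- arXiv:2512.20598 — 4 statements merged into one kernel-verified Lean document; each statement's English description precedes it below -/
import Mathlib

section
/- Let Σ = {s_0 < s_1 < ... < s_{σ-1}} be an ordered alphabet of size σ ≥ 1 and let K = s_{σ-1}^{k_{σ-1}} ... s_1^{k_1} s_0^{k_0} be a clustered string with all exponents k_i ≥ 2. Then BWT(K$) equals the explicit string s_0^{k_0} s_1^{k_1} ... s_{σ-1}^{k_{σ-1}} $ (the equal-letter blocks of K in increasing symbol order followed by the sentinel). -/
/-!
If `K` is non-increasing and `$` is smaller than all its letters, then the suffix of `K$`
starting at position `i + 1` is smaller than the one starting at `i`: compare letter by letter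
until `K` strictly drops or `$` is reached. Hence the sorted rotations of `K$` are those starting
at positions `|K|, |K| - 1, …, 0`, whose last letters spell `K` backwards followed by `$`.
A clustered string is non-increasing, and its reverse lists the blocks in increasing order.
-/

/-- The Burrows–Wheeler transform of `w`: last characters of all cyclic
rotations of `w`, listed in lexicographic order of the rotations. -/
def bwtL {α : Type*} [LinearOrder α] (w : List α) : List α :=
  (List.insertionSort (· ≤ ·)
    ((List.range w.length).map (fun i => w.rotate i))).filterMap List.getLast?

/-- Number of runs (maximal equal-letter substrings) of a string. -/
def runsCount {α : Type*} [DecidableEq α] (l : List α) : ℕ :=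
  (l.destutter (· ≠ ·)).length

/-- Terminate a string with the sentinel `⊥ = $`, smaller than every symbol. -/
def term {α : Type*} (w : List α) : List (WithBot α) :=
  w.map (fun a => (a : WithBot α)) ++ [⊥]

/-- `y` is a right-extension of `v`: `y = x ++ [a]` occurs in `v` where `x`
is right-maximal (some `x ++ [b]` with `b ≠ a` also occurs in `v`). -/
def RightExt {α : Type*} (v y : List α) : Prop :=
  ∃ x a b, y = x ++ [a] ∧ a ≠ b ∧ (x ++ [a]) <:+: v ∧ (x ++ [b]) <:+: v

/-- `y` is a super-maximal extension of `v`: a right-extension that is not a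
proper suffix of any other right-extension. -/
def SuperMax {α : Type*} (v y : List α) : Prop :=
  RightExt v y ∧ ∀ z, RightExt v z → y <:+ z → z = y

/-- Number of super-maximal extensions of `v`. -/
noncomputable def sre {α : Type*} (v : List α) : ℕ :=
  Set.ncard {y | SuperMax v y}

/-- χ(w): the size of a smallest suffixient set of `w$`, which equals the
number of super-maximal extensions of `w$`. -/
noncomputable def chi {α : Type*} (w : List α) : ℕ :=
  sre (term w)

/-- The clustered string `s_{σ-1}^{k_{σ-1}} ⋯ s_1^{k_1} s_0^{k_0}`. -/
def clustered {α : Type*} {σ : ℕ} (s : Fin σ → α) (k : Fin σ → ℕ) : List α :=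
  (List.finRange σ).reverse.flatMap (fun j => List.replicate (k j) (s j))

namespace List

variable {β : Type*}

theorem getLast?_rotate_succ (l : List β) {i : ℕ} (hi : i < l.length) :
    (l.rotate (i + 1)).getLast? = some l[i] := by
  rw [rotate_eq_drop_append_take hi, ← take_concat_get' l i hi, ← append_assoc, getLast?_concat]

theorem filterMap_getLast?_map_rotate_succ (l : List β) {n : ℕ} (hn : n ≤ l.length) :
    ((range n).map (fun i => l.rotate (i + 1))).filterMap getLast? = l.take n := by
  induction n with
  | zero => simp
  | succ n ih =>
    rw [range_succ, map_append, filterMap_append, ih (by omega), ← take_concat_get' l n hn]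
    simp [getLast?_rotate_succ l hn]

theorem rotate_append_singleton (K : List β) (z : β) {i : ℕ} (hi : i ≤ K.length) :
    (K ++ [z]).rotate i = K.drop i ++ z :: K.take i := by
  rw [rotate_eq_drop_append_take (by rw [length_append, length_singleton]; omega),
    drop_append_of_le_length hi, take_append_of_le_length hi, append_assoc, singleton_append]

variable [LinearOrder β]

theorem append_cons_lt_cons_append_cons {x z : β} {L : List β}
    (hL : (x :: L).Pairwise (· ≥ ·)) (hz : ∀ y ∈ x :: L, z < y) (u u' : List β) :
    L ++ z :: u < x :: (L ++ z :: u') := by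
  induction L generalizing x with
  | nil => exact Lex.rel (hz x mem_cons_self)
  | cons y L ih =>
    have hyx : y ≤ x := rel_of_pairwise_cons hL mem_cons_self
    rcases hyx.lt_or_eq with hlt | rfl
    · exact Lex.rel hlt
    · exact Lex.cons (ih hL.of_cons fun w hw => hz w (mem_cons_of_mem _ hw))

theorem rotate_succ_lt_rotate_append_singleton {K : List β} {z : β}
    (hK : K.Pairwise (· ≥ ·)) (hz : ∀ y ∈ K, z < y) {i : ℕ} (hi : i < K.length) :
    (K ++ [z]).rotate (i + 1) < (K ++ [z]).rotate i := by
  have hdrop := drop_eq_getElem_cons hi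
  rw [rotate_append_singleton K z hi, rotate_append_singleton K z hi.le, hdrop, cons_append]
  exact append_cons_lt_cons_append_cons (hdrop ▸ hK.sublist (drop_sublist i K))
    (fun y hy => hz y (mem_of_mem_drop (hdrop ▸ hy))) _ _

theorem pairwise_map_rotate_reverse_range {K : List β} {z : β}
    (hK : K.Pairwise (· ≥ ·)) (hz : ∀ y ∈ K, z < y) :
    ((range (K.length + 1)).reverse.map (K ++ [z]).rotate).Pairwise (· ≤ ·) := by
  rw [← isChain_iff_pairwise, isChain_map, isChain_reverse, isChain_range_succ]
  exact fun m hm => (rotate_succ_lt_rotate_append_singleton hK hz hm).le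

end List

open List

theorem bwtL_append_singleton {β : Type*} [LinearOrder β] {K : List β} {z : β}
    (hK : K.Pairwise (· ≥ ·)) (hz : ∀ y ∈ K, z < y) :
    bwtL (K ++ [z]) = K.reverse ++ [z] := by
  have hsort : insertionSort (· ≤ ·) ((range (K ++ [z]).length).map (K ++ [z]).rotate) =
      (range (K.length + 1)).reverse.map (K ++ [z]).rotate :=
    Perm.eq_of_pairwise' (pairwise_insertionSort _ _) (pairwise_map_rotate_reverse_range hK hz)
      ((perm_insertionSort _ _).trans (by
        rw [length_append, length_singleton]; exact ((reverse_perm _).map _).symm))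
  rw [bwtL, hsort, range_succ_eq_map, reverse_cons, map_append, filterMap_append, map_reverse,
    filterMap_reverse, map_map]
  have hlasts : ((range K.length).map fun i => (K ++ [z]).rotate (i + 1)).filterMap getLast? =
      K := by
    rw [filterMap_getLast?_map_rotate_succ _ (by simp), take_left' rfl]
  simp [Function.comp_def, hlasts]

theorem pairwise_ge_clustered {α : Type*} [Preorder α] {σ : ℕ} {s : Fin σ → α}
    (hs : Monotone s) (k : Fin σ → ℕ) : (clustered s k).Pairwise (· ≥ ·) := by
  refine pairwise_flatMap.mpr ⟨fun j _ => pairwise_replicate.mpr (Or.inr le_rfl), ?_⟩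
  refine pairwise_reverse.mpr ((pairwise_le_finRange σ).imp fun hij => ?_)
  intro x hx y hy
  rw [eq_of_mem_replicate hx, eq_of_mem_replicate hy]
  exact hs hij

theorem reverse_clustered {α : Type*} {σ : ℕ} (s : Fin σ → α) (k : Fin σ → ℕ) :
    (clustered s k).reverse = (finRange σ).flatMap fun j => replicate (k j) (s j) := by
  simp [clustered, reverse_flatMap, Function.comp_def]

-- The coercion in `term` elaborates through the list monad, so this is not `rfl`.
theorem term_eq_map_coe_append {α : Type*} (w : List α) :
    term w = w.map ((↑) : α → WithBot α) ++ [⊥] := by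
  simp [term, map_eq_flatMap]

theorem clustered_bwt_eq_general {α : Type*} [LinearOrder α] (σ : ℕ)
    (s : Fin σ → α) (hs : StrictMono s)
    (k : Fin σ → ℕ) :
    bwtL (term (clustered s k)) =
      (List.finRange σ).flatMap
        (fun j => List.replicate (k j) ((s j : WithBot α))) ++ [⊥] := by
  have hK : ((clustered s k).map ((↑) : α → WithBot α)).Pairwise (· ≥ ·) :=
    (pairwise_ge_clustered hs.monotone k).map _ fun _ _ h => WithBot.coe_le_coe.mpr h
  rw [term_eq_map_coe_append, bwtL_append_singleton hK (by simp), ← map_reverse,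
    reverse_clustered, map_flatMap]
  simp

/-- the BWT of the terminated clustered string is the string
`s_0^{k_0} s_1^{k_1} ⋯ s_{σ-1}^{k_{σ-1}} $` (the blocks in increasing
symbol order, followed by the sentinel). -/
theorem clustered_bwt_eq {α : Type*} [LinearOrder α] (σ : ℕ) (hσ : 1 ≤ σ)
    (s : Fin σ → α) (hs : StrictMono s)
    (k : Fin σ → ℕ) (hk : ∀ j, 2 ≤ k j) :
    bwtL (term (clustered s k)) =
      (List.finRange σ).flatMap
        (fun j => List.replicate (k j) ((s j : WithBot α))) ++ [⊥] :=
  clustered_bwt_eq_general σ s hs k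
end

section
/- Let Σ = {s_0 < s_1 < ... < s_{σ-1}} be an ordered alphabet of size σ ≥ 1 and let K = s_{σ-1}^{k_{σ-1}} ... s_1^{k_1} s_0^{k_0} be a clustered string with all exponents k_i ≥ 2. Then the set of super-maximal extensions of K$ is exactly { s_j^{k_j} : 0 ≤ j ≤ σ-1 } ∪ { s_j^{k_j - 1} s_{j-1} : 1 ≤ j ≤ σ-1 } ∪ { s_0^{k_0 - 1} $ }, containing exactly two elements per symbol s_j. -/
/-! The runs of `K$` carry pairwise distinct letters. Inside an occurrence of a string, a change
of letter can only happen at a run boundary, so after `d e^m` with `d ≠ e` the next letter is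
determined; hence a right-maximal string is a power `e^m` of one letter, and it is followed
either by `e` (if `m < k_e`) or by the letter after the run of `e`. The right-extensions are thus
the nonempty suffixes of the `2σ` strings `s_j^{k_j}` and `s_j^{k_j-1} s_{j-1}` (with
`s_{-1} = $`), and as all `k_j ≥ 2` these strings are told apart by their last two letters, so
none is a suffix of another. -/

open List

section
variable {β : Type*}

theorem List.infix_replicate_append {y w : List β} {n : ℕ} {f : β}
    (h : y <:+: replicate n f ++ w) :
    y <:+: w ∨ ∃ i z, y = replicate i f ++ z ∧ z <+: w := by
  rcases infix_append_iff.mp h with h | h | ⟨y₁, y₂, rfl, h₁, h₂⟩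
  · exact Or.inr ⟨y.length, [], by simpa using (infix_replicate_iff.mp h).2, nil_prefix⟩
  · exact Or.inl h
  · exact Or.inr ⟨y₁.length, y₂, by rw [← (suffix_replicate_iff.mp h₁).2], h₂⟩

theorem List.replicate_suffix_replicate {m n : ℕ} {a : β} (h : m ≤ n) :
    replicate m a <:+ replicate n a :=
  suffix_replicate_iff.mpr ⟨by simpa using h, by simp⟩

theorem List.exists_eq_replicate_or_eq_append_cons_replicate (p : List β) (e : β) :
    ∃ j, p = replicate j e ∨ ∃ u d, d ≠ e ∧ p = u ++ d :: replicate j e := by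
  induction p using List.reverseRecOn with
  | nil => exact ⟨0, Or.inl rfl⟩
  | append_singleton p c ih =>
    by_cases hc : c = e
    · subst hc
      obtain ⟨j, h | ⟨u, d, hd, h⟩⟩ := ih
      · exact ⟨j + 1, Or.inl (by rw [h, replicate_succ'])⟩
      · exact ⟨j + 1, Or.inr ⟨u, d, hd, by rw [h, replicate_succ']; simp⟩⟩
    · exact ⟨0, Or.inr ⟨p, c, hc, by simp⟩⟩

-- Extend an occurrence of `e^m t` to the left over all preceding copies of `e`.
theorem List.exists_replicate_append_prefix_or_cons_infix {v t : List β} {m : ℕ} {e : β}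
    (h : replicate m e ++ t <:+: v) :
    ∃ m', m ≤ m' ∧ (replicate m' e ++ t <+: v ∨
      ∃ d, d ≠ e ∧ d :: (replicate m' e ++ t) <:+: v) := by
  obtain ⟨p, q, rfl⟩ := h
  obtain ⟨j, rfl | ⟨u, d, hd, rfl⟩⟩ := p.exists_eq_replicate_or_eq_append_cons_replicate e
  · exact ⟨j + m, by omega, Or.inl ⟨q, by simp only [replicate_add, append_assoc]⟩⟩
  · refine ⟨j + m, by omega, Or.inr ⟨d, hd, u, q, ?_⟩⟩
    simp only [replicate_add, append_assoc, cons_append]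

theorem List.replicate_append_singleton_prefix {w : List β} {m n : ℕ} {e a : β} (he : e ∉ w)
    (h : replicate m e ++ [a] <+: replicate n e ++ w) :
    m < n ∧ a = e ∨ m = n ∧ w.head? = some a := by
  rcases lt_or_ge m n with hmn | hnm
  · obtain ⟨i, rfl⟩ := Nat.exists_eq_add_of_lt hmn
    rw [Nat.add_assoc, replicate_add, append_assoc, prefix_append_right_inj, replicate_succ,
      cons_append, singleton_prefix_cons_iff] at h
    exact Or.inl ⟨by omega, h⟩
  · obtain ⟨i, rfl⟩ := Nat.exists_eq_add_of_le hnm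
    rw [replicate_add, append_assoc, prefix_append_right_inj] at h
    cases i with
    | zero => exact Or.inr ⟨rfl, singleton_prefix_iff_head?_eq_some.mp (by simpa using h)⟩
    | succ i => exact absurd (h.subset (by simp)) he

def decodeRuns (L : List (β × ℕ)) : List β :=
  L.flatMap fun p => replicate p.2 p.1

@[simp]
theorem decodeRuns_nil : decodeRuns ([] : List (β × ℕ)) = [] := rfl

@[simp]
theorem decodeRuns_cons (f : β) (n : ℕ) (L : List (β × ℕ)) :
    decodeRuns ((f, n) :: L) = replicate n f ++ decodeRuns L := rfl

theorem decodeRuns_append (L₁ L₂ : List (β × ℕ)) :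
    decodeRuns (L₁ ++ L₂) = decodeRuns L₁ ++ decodeRuns L₂ :=
  flatMap_append

theorem mem_map_fst_of_mem_decodeRuns {L : List (β × ℕ)} {a : β} (h : a ∈ decodeRuns L) :
    a ∈ L.map Prod.fst := by
  simp only [decodeRuns, mem_flatMap, mem_replicate] at h
  obtain ⟨p, hp, -, rfl⟩ := h
  exact mem_map_of_mem hp

theorem List.cons_suffix_unique {γ : Type*} {L L₁ L₂ : List (β × γ)} {e : β} {n₁ n₂ : γ}
    (hL : (L.map Prod.fst).Nodup) (h₁ : (e, n₁) :: L₁ <:+ L) (h₂ : (e, n₂) :: L₂ <:+ L) :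
    n₁ = n₂ ∧ L₁ = L₂ := by
  induction L with
  | nil => simp at h₁
  | cons p L ih =>
    obtain ⟨f, c⟩ := p
    rw [map_cons, nodup_cons] at hL
    have head_ne : ∀ {n l}, (e, n) :: l <:+ L → e ≠ f := by
      rintro n l h rfl
      exact hL.1 (mem_map_of_mem (f := Prod.fst) (a := (e, n)) (h.subset mem_cons_self))
    rcases suffix_cons_iff.mp h₁ with h₁ | h₁ <;> rcases suffix_cons_iff.mp h₂ with h₂ | h₂
    · simp only [cons.injEq, Prod.mk.injEq] at h₁ h₂
      exact ⟨h₁.1.2.trans h₂.1.2.symm, h₁.2.trans h₂.2.symm⟩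
    · exact absurd (congrArg Prod.fst (cons_eq_cons.mp h₁).1) (head_ne h₂)
    · exact absurd (congrArg Prod.fst (cons_eq_cons.mp h₂).1) (head_ne h₁)
    · exact ih hL.2 h₁ h₂

-- A change of letter inside an occurrence can only happen at a run boundary.
theorem exists_suffix_prefix_of_cons_infix {L : List (β × ℕ)} {d : β} {w : List β}
    (hw : w.head? ≠ some d) (h : d :: w <:+: decodeRuns L) :
    ∃ L₂, L₂ <:+ L ∧ w <+: decodeRuns L₂ := by
  induction L with
  | nil => simp at h
  | cons p L ih =>
    obtain ⟨f, n⟩ := p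
    rcases infix_replicate_append h with h | ⟨i, z, hz, hpre⟩
    · obtain ⟨L₂, hL₂, hw⟩ := ih h
      exact ⟨L₂, hL₂.trans (suffix_cons _ _), hw⟩
    · match i, hz with
      | 0, hz =>
        obtain ⟨L₂, hL₂, hw⟩ := ih (hz ▸ hpre.isInfix)
        exact ⟨L₂, hL₂.trans (suffix_cons _ _), hw⟩
      | 1, hz =>
        obtain ⟨-, rfl⟩ := cons_eq_cons.mp hz
        exact ⟨L, suffix_cons _ _, hpre⟩
      | i + 2, hz =>
        simp only [replicate_succ, cons_append, cons.injEq] at hz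
        exact (hw (by rw [hz.2, hz.1]; rfl)).elim

theorem exists_cons_suffix_of_replicate_append_prefix {L : List (β × ℕ)}
    (hL : (L.map Prod.fst).Nodup) {m : ℕ} {e a : β} (hm : m ≠ 0)
    (h : replicate m e ++ [a] <+: decodeRuns L) :
    ∃ n L₃, (e, n) :: L₃ <:+ L ∧
      (m < n ∧ a = e ∨ m = n ∧ (decodeRuns L₃).head? = some a) := by
  induction L with
  | nil => simp at h
  | cons p L ih =>
    obtain ⟨f, n⟩ := p
    rw [map_cons, nodup_cons] at hL
    cases n with
    | zero =>
      obtain ⟨n, L₃, h₃, ha⟩ := ih hL.2 (by simpa using h)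
      exact ⟨n, L₃, h₃.trans (suffix_cons _ _), ha⟩
    | succ n =>
      obtain ⟨m, rfl⟩ := Nat.exists_eq_succ_of_ne_zero hm
      have hef : e = f := by
        simp only [replicate_succ, cons_append, decodeRuns_cons, cons_prefix_cons] at h
        exact h.1
      subst hef
      exact ⟨n + 1, L, suffix_rfl, replicate_append_singleton_prefix
        (fun he => hL.1 (mem_map_fst_of_mem_decodeRuns he)) h⟩

theorem exists_cons_suffix_of_cons_replicate_append_infix {L : List (β × ℕ)}
    (hL : (L.map Prod.fst).Nodup) {m : ℕ} {d e a : β} (hde : d ≠ e) (hm : m ≠ 0)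
    (h : d :: (replicate m e ++ [a]) <:+: decodeRuns L) :
    ∃ n L₃, (e, n) :: L₃ <:+ L ∧
      (m < n ∧ a = e ∨ m = n ∧ (decodeRuns L₃).head? = some a) := by
  obtain ⟨m, rfl⟩ := Nat.exists_eq_succ_of_ne_zero hm
  obtain ⟨L₂, hL₂, hpre⟩ :=
    exists_suffix_prefix_of_cons_infix (by simp [replicate_succ, hde.symm]) h
  obtain ⟨n, L₃, h₃, ha⟩ :=
    exists_cons_suffix_of_replicate_append_prefix (hL.sublist (hL₂.sublist.map _)) hm hpre
  exact ⟨n, L₃, h₃.trans hL₂, ha⟩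

theorem exists_cons_suffix_of_replicate_append_infix {L : List (β × ℕ)}
    (hL : (L.map Prod.fst).Nodup) {m : ℕ} {e a : β} (hm : m ≠ 0)
    (h : replicate m e ++ [a] <:+: decodeRuns L) :
    ∃ m' n L₃, m ≤ m' ∧ (e, n) :: L₃ <:+ L ∧
      (m' < n ∧ a = e ∨ m' = n ∧ (decodeRuns L₃).head? = some a) := by
  obtain ⟨m', hmm', h | ⟨d, hd, h⟩⟩ := exists_replicate_append_prefix_or_cons_infix h
  · obtain ⟨n, L₃, h₃, ha⟩ := exists_cons_suffix_of_replicate_append_prefix hL (by omega) h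
    exact ⟨m', n, L₃, hmm', h₃, ha⟩
  · obtain ⟨n, L₃, h₃, ha⟩ :=
      exists_cons_suffix_of_cons_replicate_append_infix hL hd (by omega) h
    exact ⟨m', n, L₃, hmm', h₃, ha⟩

theorem exists_eq_replicate_of_append_singleton_infix {L : List (β × ℕ)}
    (hL : (L.map Prod.fst).Nodup) {x : List β} {a b : β} (hab : a ≠ b) (hx : x ≠ [])
    (ha : x ++ [a] <:+: decodeRuns L) (hb : x ++ [b] <:+: decodeRuns L) :
    ∃ e m, m ≠ 0 ∧ x = replicate m e := by
  obtain ⟨x, e, rfl⟩ := (eq_nil_or_concat' x).resolve_left hx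
  obtain ⟨j, rfl | ⟨u, d, hd, rfl⟩⟩ := x.exists_eq_replicate_or_eq_append_cons_replicate e
  · exact ⟨e, j + 1, by omega, by rw [replicate_succ']⟩
  exfalso
  have hrun : ∀ c, u ++ d :: replicate j e ++ [e] ++ [c] <:+: decodeRuns L →
      d :: (replicate (j + 1) e ++ [c]) <:+: decodeRuns L := fun c h =>
    (IsSuffix.isInfix ⟨u, by simp [replicate_succ']⟩).trans h
  obtain ⟨n, L₃, h₃, ha⟩ :=
    exists_cons_suffix_of_cons_replicate_append_infix hL hd (by omega) (hrun a ha)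
  obtain ⟨n', L₃', h₃', hb⟩ :=
    exists_cons_suffix_of_cons_replicate_append_infix hL hd (by omega) (hrun b hb)
  obtain ⟨rfl, rfl⟩ := cons_suffix_unique hL h₃ h₃'
  rcases ha with ⟨ha', rfl⟩ | ⟨ha', ha⟩ <;> rcases hb with ⟨hb', rfl⟩ | ⟨hb', hb⟩
  · exact hab rfl
  · omega
  · omega
  · exact hab (Option.some_injective _ (ha.symm.trans hb))

theorem List.IsSuffix.reverse_take_eq {l₁ l₂ : List β} {n : ℕ} (h : l₁ <:+ l₂)
    (hn : n ≤ l₁.length) : l₁.reverse.take n = l₂.reverse.take n := by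
  rw [prefix_iff_eq_take.mp h.reverse, take_take, length_reverse, min_eq_left hn]

theorem setOf_superMax_eq {v : List β} {M : Set (List β)}
    (hM : ∀ z ∈ M, RightExt v z) (hcover : ∀ y, RightExt v y → ∃ z ∈ M, y <:+ z)
    (hanti : ∀ z ∈ M, ∀ z' ∈ M, z <:+ z' → z = z') :
    {y | SuperMax v y} = M := by
  ext y
  constructor
  · rintro ⟨hy, hmax⟩
    obtain ⟨z, hz, hyz⟩ := hcover y hy
    exact hmax z (hM z hz) hyz ▸ hz
  · intro hy
    refine ⟨hM y hy, fun z hz hyz => ?_⟩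
    obtain ⟨z', hz', hzz'⟩ := hcover z hz
    obtain rfl := hanti y hy z' hz' (hyz.trans hzz')
    exact hzz'.eq_of_length_le hyz.length_le

end

section Clustered
variable {α : Type*} {σ : ℕ} (s : Fin σ → α) (k : Fin σ → ℕ)

def clusteredRuns : List (WithBot α × ℕ) :=
  ((finRange σ).reverse.map fun j => ((s j : WithBot α), k j)) ++ [(⊥, 1)]

def follower (j : Fin σ) : WithBot α :=
  if 1 ≤ (j : ℕ) then s ⟨j - 1, lt_of_le_of_lt (Nat.sub_le _ _) j.isLt⟩ else ⊥

-- The coercion in `term` elaborates through the list monad, as `w.flatMap fun a => [↑a]`.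
theorem term_eq_map_append (w : List α) : term w = w.map WithBot.some ++ [⊥] := by
  simp [term, map_eq_flatMap]

theorem decodeRuns_clusteredRuns : decodeRuns (clusteredRuns s k) = term (clustered s k) := by
  simp [decodeRuns, clusteredRuns, term_eq_map_append, clustered, map_flatMap,
    flatMap_map, -map_reverse]

variable {s k}

theorem nodup_map_fst_clusteredRuns (hs : Function.Injective s) :
    ((clusteredRuns s k).map Prod.fst).Nodup := by
  simp only [clusteredRuns, map_append, map_map, map_reverse]
  refine nodup_append.mpr ⟨nodup_reverse.mpr ((nodup_finRange σ).map ?_), nodup_singleton _, ?_⟩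
  · exact WithBot.coe_injective.comp hs
  · simp

theorem follower_ne (hs : Function.Injective s) (j : Fin σ) : follower s j ≠ s j := by
  unfold follower
  split
  · intro h
    have := congrArg Fin.val (hs (WithBot.coe_injective h))
    simp at this
    omega
  · exact WithBot.bot_ne_coe

theorem exists_cons_suffix_clusteredRuns (hk : ∀ j, k j ≠ 0) (j : Fin σ) :
    ∃ L, ((s j : WithBot α), k j) :: L <:+ clusteredRuns s k ∧
      (decodeRuns L).head? = some (follower s j) := by
  have htake : ∀ i : Fin σ, (finRange σ).take (i + 1) = (finRange σ).take i ++ [i] := by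
    intro i
    rw [take_add_one, getElem?_eq_getElem (by simp)]
    simp
  refine ⟨((finRange σ).take j).reverse.map (fun j => ((s j : WithBot α), k j)) ++ [(⊥, 1)],
    ⟨((finRange σ).drop (j + 1)).reverse.map (fun j => ((s j : WithBot α), k j)), ?_⟩, ?_⟩
  · conv_rhs => rw [clusteredRuns, ← take_append_drop (j + 1) (finRange σ), htake]
    simp
  · obtain ⟨_ | i, hj⟩ := j
    · simp [follower]
    · have hi : i < σ := by omega
      rw [show (finRange σ).take (i + 1) = _ from htake ⟨i, hi⟩]
      obtain ⟨n, hn⟩ := Nat.exists_eq_succ_of_ne_zero (hk ⟨i, hi⟩)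
      simp [follower, hn, replicate_succ]

theorem eq_bot_or_eq_of_cons_suffix_clusteredRuns (hs : Function.Injective s)
    (hk : ∀ j, k j ≠ 0) {e : WithBot α} {n : ℕ} {L : List (WithBot α × ℕ)}
    (h : (e, n) :: L <:+ clusteredRuns s k) :
    e = ⊥ ∧ n = 1 ∧ L = [] ∨
      ∃ j, e = s j ∧ n = k j ∧ (decodeRuns L).head? = some (follower s j) := by
  have hL := nodup_map_fst_clusteredRuns (k := k) hs
  cases e with
  | bot => exact Or.inl ⟨rfl, cons_suffix_unique hL h (suffix_append _ _)⟩
  | coe a =>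
    have ha : (a : WithBot α) ∈ (clusteredRuns s k).map Prod.fst :=
      mem_map_of_mem (f := Prod.fst) (a := ((a : WithBot α), n)) (h.subset mem_cons_self)
    obtain ⟨j, -, rfl⟩ : ∃ j, j ∈ finRange σ ∧ s j = a := by simpa [clusteredRuns] using ha
    obtain ⟨L', hL', hhead⟩ := exists_cons_suffix_clusteredRuns hk j
    obtain ⟨rfl, rfl⟩ := cons_suffix_unique hL h hL'
    exact Or.inr ⟨j, rfl, rfl, hhead⟩

theorem exists_eq_of_replicate_append_infix_term_clustered (hs : Function.Injective s)
    (hk : ∀ j, k j ≠ 0) {m : ℕ} {e a : WithBot α} (hm : m ≠ 0)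
    (h : replicate m e ++ [a] <:+: term (clustered s k)) :
    ∃ j, e = s j ∧ (m < k j ∧ a = s j ∨ m ≤ k j ∧ a = follower s j) := by
  rw [← decodeRuns_clusteredRuns] at h
  obtain ⟨m', n, L, hmm', hsuf, ha⟩ :=
    exists_cons_suffix_of_replicate_append_infix (nodup_map_fst_clusteredRuns hs) hm h
  rcases eq_bot_or_eq_of_cons_suffix_clusteredRuns hs hk hsuf with ⟨-, rfl, rfl⟩ | ⟨j, rfl, rfl, hj⟩
  · rcases ha with ⟨h1, -⟩ | ⟨-, h2⟩
    · omega
    · simp at h2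
  · refine ⟨j, rfl, ?_⟩
    rcases ha with ⟨h1, rfl⟩ | ⟨h1, h2⟩
    · exact Or.inl ⟨by omega, rfl⟩
    · exact Or.inr ⟨by omega, Option.some_injective _ (h2.symm.trans hj)⟩

variable (s k) in
def clusteredSupermax : Fin σ × Bool → List (WithBot α)
  | (j, false) => replicate (k j) (s j : WithBot α)
  | (j, true) => replicate (k j - 1) (s j : WithBot α) ++ [follower s j]

theorem replicate_append_follower_infix (hk : ∀ j, k j ≠ 0) (j : Fin σ) :
    replicate (k j) (s j : WithBot α) ++ [follower s j] <:+: term (clustered s k) := by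
  obtain ⟨L, ⟨P, hP⟩, hhead⟩ := exists_cons_suffix_clusteredRuns hk j
  rw [← decodeRuns_clusteredRuns, ← hP, decodeRuns_append, decodeRuns_cons]
  have hpre := (prefix_append_right_inj (replicate (k j) (s j : WithBot α))).mpr
    (singleton_prefix_iff_head?_eq_some.mpr hhead)
  exact hpre.isInfix.trans (suffix_append _ _).isInfix

theorem mem_term_clustered {a : WithBot α} (h : a ∈ term (clustered s k)) :
    a = ⊥ ∨ ∃ j, a = s j := by
  simp only [term_eq_map_append, clustered, mem_append, mem_map, mem_flatMap, mem_replicate,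
    mem_singleton] at h
  rcases h with ⟨_, ⟨j, -, -, rfl⟩, rfl⟩ | rfl
  · exact Or.inr ⟨j, rfl⟩
  · exact Or.inl rfl

theorem rightExt_clusteredSupermax (hs : Function.Injective s) (hk : ∀ j, k j ≠ 0)
    (p : Fin σ × Bool) : RightExt (term (clustered s k)) (clusteredSupermax s k p) := by
  obtain ⟨j, b⟩ := p
  have hocc := replicate_append_follower_infix (s := s) hk j
  have hrep : replicate (k j - 1) (s j : WithBot α) ++ [(s j : WithBot α)] =
      replicate (k j) (s j : WithBot α) := by
    rw [← replicate_succ', Nat.sub_add_cancel (Nat.one_le_iff_ne_zero.mpr (hk j))]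
  have h₁ : replicate (k j - 1) (s j : WithBot α) ++ [(s j : WithBot α)] <:+:
      term (clustered s k) := hrep ▸ (prefix_append _ _).isInfix.trans hocc
  have h₂ : replicate (k j - 1) (s j : WithBot α) ++ [follower s j] <:+: term (clustered s k) :=
    (suffix_append_self_iff.mpr (replicate_suffix_replicate (Nat.sub_le _ _))).isInfix.trans hocc
  cases b
  · exact ⟨_, _, _, hrep.symm, (follower_ne hs j).symm, h₁, h₂⟩
  · exact ⟨_, _, _, rfl, follower_ne hs j, h₂, h₁⟩

theorem exists_suffix_clusteredSupermax_of_rightExt (hs : Function.Injective s)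
    (hk : ∀ j, k j ≠ 0) {y : List (WithBot α)} (h : RightExt (term (clustered s k)) y) :
    ∃ p, y <:+ clusteredSupermax s k p := by
  obtain ⟨x, a, b, rfl, hab, ha, hb⟩ := h
  rcases eq_or_ne x [] with rfl | hx
  · have mem : ∀ {c}, [c] <:+: term (clustered s k) → c = ⊥ ∨ ∃ j, c = s j :=
      fun hc => mem_term_clustered (hc.subset (mem_singleton_self _))
    rcases mem ha with rfl | ⟨j, rfl⟩
    · obtain ⟨j, rfl⟩ := (mem hb).resolve_left (Ne.symm hab)
      refine ⟨(⟨0, j.pos⟩, true), ?_⟩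
      simp [clusteredSupermax, follower]
    · exact ⟨(j, false), replicate_suffix_replicate (m := 1) (Nat.one_le_iff_ne_zero.mpr (hk j))⟩
  rw [← decodeRuns_clusteredRuns] at ha hb
  obtain ⟨e, m, hm, rfl⟩ := exists_eq_replicate_of_append_singleton_infix
    (nodup_map_fst_clusteredRuns hs) hab hx ha hb
  rw [decodeRuns_clusteredRuns] at ha hb
  obtain ⟨j, rfl, ha'⟩ := exists_eq_of_replicate_append_infix_term_clustered hs hk hm ha
  obtain ⟨j', hj', hb'⟩ := exists_eq_of_replicate_append_infix_term_clustered hs hk hm hb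
  obtain rfl := hs (WithBot.coe_injective hj')
  rcases ha' with ⟨hlt, rfl⟩ | ⟨-, rfl⟩
  · exact ⟨(j, false), by rw [← replicate_succ']; exact replicate_suffix_replicate hlt⟩
  · rcases hb' with ⟨hlt, rfl⟩ | ⟨-, rfl⟩
    · exact ⟨(j, true), suffix_append_self_iff.mpr (replicate_suffix_replicate (by omega))⟩
    · exact absurd rfl hab

theorem reverse_take_two_clusteredSupermax (hk : ∀ j, 2 ≤ k j) (p : Fin σ × Bool) :
    (clusteredSupermax s k p).reverse.take 2 = [cond p.2 (follower s p.1) (s p.1), s p.1] := by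
  obtain ⟨j, b⟩ := p
  obtain ⟨n, hn⟩ := Nat.exists_eq_add_of_le' (hk j)
  cases b <;> simp [clusteredSupermax, hn, take_replicate]

theorem eq_of_clusteredSupermax_suffix (hs : Function.Injective s) (hk : ∀ j, 2 ≤ k j)
    {p q : Fin σ × Bool} (h : clusteredSupermax s k p <:+ clusteredSupermax s k q) : p = q := by
  obtain ⟨j, b⟩ := p
  obtain ⟨j', b'⟩ := q
  have hlen : 2 ≤ (clusteredSupermax s k (j, b)).length := by
    cases b <;> simp [clusteredSupermax] <;> have := hk j <;> omega
  have := h.reverse_take_eq hlen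
  rw [reverse_take_two_clusteredSupermax hk, reverse_take_two_clusteredSupermax hk, cons.injEq,
    cons.injEq] at this
  obtain rfl := hs (WithBot.coe_injective this.2.1)
  have := follower_ne hs j
  cases b <;> cases b' <;> simp_all

theorem range_clusteredSupermax (hσ : 1 ≤ σ) :
    Set.range (clusteredSupermax s k) =
      {y | ∃ j : Fin σ,
        y = (List.replicate (k j) (s j)).map (fun a => (a : WithBot α))} ∪
      {y | ∃ j : Fin σ, 1 ≤ (j : ℕ) ∧
        y = (List.replicate (k j - 1) (s j) ++
              [s ⟨(j : ℕ) - 1, lt_of_le_of_lt (Nat.sub_le _ _) j.isLt⟩]).map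
            (fun a => (a : WithBot α))} ∪
      {(List.replicate (k ⟨0, hσ⟩ - 1) (s ⟨0, hσ⟩)).map
          (fun a => (a : WithBot α)) ++ [⊥]} := by
  ext y
  simp only [Set.mem_range, Set.mem_union, Set.mem_ofPred_eq, Set.mem_singleton_iff, Prod.exists]
  constructor
  · rintro ⟨j, _ | _, rfl⟩
    · exact Or.inl (Or.inl ⟨j, by simp [clusteredSupermax, ← map_eq_flatMap]⟩)
    · rcases Nat.eq_zero_or_pos j with h0 | h0
      · obtain rfl : j = ⟨0, hσ⟩ := Fin.ext h0
        exact Or.inr (by simp [clusteredSupermax, follower, ← map_eq_flatMap])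
      · refine Or.inl (Or.inr ⟨j, h0, ?_⟩)
        simp [clusteredSupermax, follower, ← map_eq_flatMap]
        omega
  · rintro ((⟨j, rfl⟩ | ⟨j, hj, rfl⟩) | rfl)
    · exact ⟨j, false, by simp [clusteredSupermax, ← map_eq_flatMap]⟩
    · exact ⟨j, true, by simp [clusteredSupermax, follower, hj, ← map_eq_flatMap]⟩
    · exact ⟨⟨0, hσ⟩, true, by simp [clusteredSupermax, follower, ← map_eq_flatMap]⟩

end Clustered

/-- the set of super-maximal extensions of the terminated
clustered string is exactly
`{ s_j^{k_j} } ∪ { s_j^{k_j-1} s_{j-1} : j ≥ 1 } ∪ { s_0^{k_0-1} $ }`,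
containing exactly two elements per symbol `s_j` (so 2σ in total). -/
theorem clustered_supermax_set {α : Type*} [LinearOrder α] (σ : ℕ) (hσ : 1 ≤ σ)
    (s : Fin σ → α) (hs : StrictMono s)
    (k : Fin σ → ℕ) (hk : ∀ j, 2 ≤ k j) :
    {y | SuperMax (term (clustered s k)) y} =
      {y | ∃ j : Fin σ,
        y = (List.replicate (k j) (s j)).map (fun a => (a : WithBot α))} ∪
      {y | ∃ j : Fin σ, 1 ≤ (j : ℕ) ∧
        y = (List.replicate (k j - 1) (s j) ++
              [s ⟨(j : ℕ) - 1, lt_of_le_of_lt (Nat.sub_le _ _) j.isLt⟩]).map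
            (fun a => (a : WithBot α))} ∪
      {(List.replicate (k ⟨0, hσ⟩ - 1) (s ⟨0, hσ⟩)).map
          (fun a => (a : WithBot α)) ++ [⊥]} ∧
    Set.ncard {y | SuperMax (term (clustered s k)) y} = 2 * σ := by
  have hk₀ : ∀ j, k j ≠ 0 := fun j => Nat.ne_zero_of_lt (hk j)
  have hsuper : {y | SuperMax (term (clustered s k)) y} = Set.range (clusteredSupermax s k) :=
    setOf_superMax_eq (by rintro _ ⟨p, rfl⟩; exact rightExt_clusteredSupermax hs.injective hk₀ p)
      (fun y hy => by
        obtain ⟨p, hp⟩ := exists_suffix_clusteredSupermax_of_rightExt hs.injective hk₀ hy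
        exact ⟨_, ⟨p, rfl⟩, hp⟩)
      (by rintro _ ⟨p, rfl⟩ _ ⟨q, rfl⟩ h; rw [eq_of_clusteredSupermax_suffix hs.injective hk h])
  refine ⟨hsuper.trans (range_clusteredSupermax hσ), ?_⟩
  rw [hsuper, Set.ncard_range_of_injective fun p q (h : clusteredSupermax s k p = _) =>
    eq_of_clusteredSupermax_suffix hs.injective hk (h ▸ suffix_refl _)]
  simp [mul_comm]
end

section
/- Let Σ be an ordered alphabet of size σ ≥ 2, let k ≥ 1, and let w_lin be the linearization of (a rotation of) a σ-ary de Bruijn sequence of order k, so |w_lin| = σ^k + k − 1. Then the number of super-maximal extensions of w_lin is sre(w_lin) = σ^k. -/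
/-- A de Bruijn sequence of order `k` over a finite alphabet `α`: a cyclic
word of length `(card α)^k` in which every word of length `k` occurs exactly
once as a cyclic length-`k` window. -/
def IsDeBruijn {α : Type*} [Fintype α] (k : ℕ) (C : List α) : Prop :=
  C.length = Fintype.card α ^ k ∧
  ∀ x : List α, x.length = k → ∃! i, i < C.length ∧ x = (C.rotate i).take k

/-- The linearization of a rotation `U` of a de Bruijn cycle of order `k`:
append the first `k − 1` characters of `U` at the end. -/
def linz {α : Type*} (k : ℕ) (U : List α) : List α :=
  U ++ U.take (k - 1)

/-!
In the linearization `w` of a de Bruijn cycle of order `k ≥ 1`, every word of length `k` occurs at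
exactly one position. Padding shows that every word of length at most `k` occurs in `w`, so over an
alphabet with two letters every nonempty such word is a right-extension. Conversely, if `x` has
length at least `k` and both `xa` and `xb` occur, the length-`k` prefix of `x` forces both
occurrences to start at the same position, so `a = b`: right-extensions have length at most `k`.
Hence the right-extensions of `w` are exactly the nonempty words of length at most `k`; a shorter
one is a proper suffix of a longer one, so the super-maximal ones are the `σ ^ k` words of length
exactly `k`.
-/

theorem List.infix_iff_exists_prefix_drop {α : Type*} {s w : List α} :
    s <:+: w ↔ ∃ p, s <+: w.drop p := by
  constructor
  · rintro ⟨l, r, rfl⟩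
    exact ⟨l.length, by simp⟩
  · rintro ⟨p, hp⟩
    exact hp.isInfix.trans (List.drop_suffix p w).isInfix

theorem ncard_setOf_length_eq {α : Type*} [Fintype α] (k : ℕ) :
    {l : List α | l.length = k}.ncard = Fintype.card α ^ k := by
  rw [← Nat.card_coe_set_eq]
  exact (Nat.card_eq_fintype_card (α := List.Vector α k)).trans (card_vector k)

section UniqueWindows

variable {α : Type*} {v : List α} {k : ℕ}

theorem infix_of_length_le [Nonempty α] (hv : ∀ x : List α, x.length = k → x <:+: v)
    {x : List α} (hx : x.length ≤ k) : x <:+: v :=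
  (List.prefix_append x (List.replicate (k - x.length) (Classical.arbitrary α))).isInfix.trans
    (hv _ (by simp; omega))

theorem eq_of_append_singleton_infix
    (hv : ∀ x : List α, x.length = k → ∀ p q, x <+: v.drop p → x <+: v.drop q → p = q)
    {x : List α} {a b : α} (hx : k ≤ x.length) (ha : x ++ [a] <:+: v) (hb : x ++ [b] <:+: v) :
    a = b := by
  obtain ⟨p, hp⟩ := List.infix_iff_exists_prefix_drop.mp ha
  obtain ⟨q, hq⟩ := List.infix_iff_exists_prefix_drop.mp hb
  have hxk : x.take k <+: x := List.take_prefix k x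
  obtain rfl : p = q := hv _ (by simpa using hx) _ _
    (hxk.trans ((List.prefix_append x _).trans hp)) (hxk.trans ((List.prefix_append x _).trans hq))
  have hab := (List.prefix_of_prefix_length_le hp hq (by simp)).eq_of_length (by simp)
  simpa using hab

theorem RightExt.length_le
    (hv : ∀ x : List α, x.length = k → ∀ p q, x <+: v.drop p → x <+: v.drop q → p = q)
    {y : List α} (hy : RightExt v y) : y.length ≤ k := by
  obtain ⟨x, a, b, rfl, hab, ha, hb⟩ := hy
  by_contra! hlong
  exact hab (eq_of_append_singleton_infix hv (by simp at hlong; omega) ha hb)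

theorem rightExt_of_forall_infix [Nontrivial α] {y : List α} (hy : y ≠ [])
    (hv : ∀ x : List α, x.length = y.length → x <:+: v) : RightExt v y := by
  obtain ⟨b, hb⟩ := exists_ne (y.getLast hy)
  refine ⟨y.dropLast, y.getLast hy, b, (List.dropLast_append_getLast hy).symm, hb.symm, ?_, ?_⟩
  · rw [List.dropLast_append_getLast hy]
    exact hv y rfl
  · exact hv _ (by simpa using Nat.sub_add_cancel (List.length_pos_of_ne_nil hy))

variable [Nontrivial α]

theorem rightExt_iff_of_existsUnique
    (hv : ∀ x : List α, x.length = k → ∃! p, x <+: v.drop p) {y : List α} :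
    RightExt v y ↔ y ≠ [] ∧ y.length ≤ k := by
  refine ⟨fun hy => ⟨?_, hy.length_le fun x hx _ _ => (hv x hx).unique⟩,
    fun ⟨hne, hle⟩ => ?_⟩
  · obtain ⟨x, a, b, rfl, -⟩ := hy
    simp
  · refine rightExt_of_forall_infix hne fun x hx => infix_of_length_le ?_ (hx.trans_le hle)
    exact fun x hx => List.infix_iff_exists_prefix_drop.mpr (hv x hx).exists

theorem superMax_iff_of_existsUnique
    (hv : ∀ x : List α, x.length = k → ∃! p, x <+: v.drop p) (hk : 1 ≤ k) {y : List α} :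
    SuperMax v y ↔ y.length = k := by
  simp only [SuperMax, rightExt_iff_of_existsUnique hv]
  constructor
  · rintro ⟨⟨hne, hle⟩, hmax⟩
    by_contra hlt
    obtain ⟨a⟩ := (inferInstance : Nonempty α)
    have := hmax (a :: y) ⟨by simp, by simp; omega⟩ (List.suffix_cons a y)
    simpa using congrArg List.length this
  · intro hy
    refine ⟨⟨by rintro rfl; simp at hy; omega, hy.le⟩, fun z ⟨_, hz⟩ hyz => ?_⟩
    exact (hyz.eq_of_length (by have := hyz.length_le; omega)).symm

theorem sre_eq_card_pow_of_existsUnique [Fintype α]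
    (hv : ∀ x : List α, x.length = k → ∃! p, x <+: v.drop p) (hk : 1 ≤ k) :
    sre v = Fintype.card α ^ k := by
  rw [sre, ← ncard_setOf_length_eq k]
  congr 1
  ext y
  exact superMax_iff_of_existsUnique hv hk

end UniqueWindows

section DeBruijn

variable {α : Type*} {k : ℕ}

theorem IsDeBruijn.rotate [Fintype α] {C : List α} (hC : IsDeBruijn k C) (c : ℕ) :
    IsDeBruijn k (C.rotate c) := by
  refine ⟨by rw [List.length_rotate, hC.1], fun x hx => ?_⟩
  obtain ⟨i, ⟨hi, hxi⟩, huniq⟩ := hC.2 x hx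
  set N := C.length
  have hN : 0 < N := by omega
  have hwin : ∀ j, (C.rotate c).rotate j = C.rotate ((c + j) % N) := fun j => by
    rw [List.rotate_rotate, List.rotate_mod]
  -- shifting by `N - c % N` undoes the rotation by `c`
  have hshift : (c + (N - c % N + i)) % N = i := by
    have : c + (N - c % N + i) = i + N * (c / N + 1) := by
      have := Nat.div_add_mod c N
      have := Nat.mod_lt c hN
      rw [Nat.mul_add_one]
      omega
    rw [this, Nat.add_mul_mod_self_left, Nat.mod_eq_of_lt hi]
  refine ⟨(N - c % N + i) % N, ⟨by simpa using Nat.mod_lt _ hN, ?_⟩, ?_⟩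
  · rwa [hwin, Nat.add_mod_mod, hshift]
  · rintro j ⟨hj, hxj⟩
    rw [List.length_rotate] at hj
    have hcj : (c + j) % N = (c + (N - c % N + i)) % N := by
      rw [hshift]
      exact huniq _ ⟨Nat.mod_lt _ hN, hwin j ▸ hxj⟩
    exact ((Nat.ModEq.add_left_cancel' c hcj).trans (Nat.mod_modEq _ _).symm).eq_of_lt_of_lt hj
      (Nat.mod_lt _ hN)

theorem take_drop_linz {U : List α} {p : ℕ} (hk : k ≤ U.length) (hp : p < U.length) :
    ((linz k U).drop p).take k = (U.rotate p).take k := by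
  rw [linz, List.rotate_eq_drop_append_take hp.le, List.drop_append, Nat.sub_eq_zero_of_le hp.le,
    List.drop_zero, List.take_append, List.take_append, List.take_take, List.take_take,
    List.length_drop]
  congr 2
  omega

theorem IsDeBruijn.existsUnique_prefix_drop_linz [Fintype α] {U : List α} (hU : IsDeBruijn k U)
    (hk : 1 ≤ k) (hkU : k ≤ U.length) {x : List α} (hx : x.length = k) :
    ∃! p, x <+: (linz k U).drop p := by
  obtain ⟨i, ⟨hi, hxi⟩, huniq⟩ := hU.2 x hx
  have hwin : ∀ p < U.length, x <+: (linz k U).drop p ↔ x = (U.rotate p).take k :=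
    fun p hp => by
      rw [List.prefix_iff_eq_take, hx, take_drop_linz hkU hp]
  have hlt : ∀ p, x <+: (linz k U).drop p → p < U.length := fun p hp => by
    have := hp.length_le
    simp only [linz, List.length_drop, List.length_append, List.length_take] at this
    omega
  exact ⟨i, (hwin i hi).2 hxi, fun p hp => huniq p ⟨hlt p hp, (hwin p (hlt p hp)).1 hp⟩⟩

end DeBruijn

theorem deBruijn_sre_general {α : Type*} [Fintype α]
    (σ : ℕ) (hσ : 2 ≤ σ) (hcard : Fintype.card α = σ)
    (k : ℕ) (hk : 1 ≤ k)
    (C : List α) (hC : IsDeBruijn k C) (c : ℕ) :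
    sre (linz k (C.rotate c)) = σ ^ k := by
  have : Nontrivial α := Fintype.one_lt_card_iff_nontrivial.mp (by omega)
  have hU := hC.rotate c
  have hkU : k ≤ (C.rotate c).length := by
    rw [hU.1, hcard]
    exact (Nat.lt_pow_self (by omega)).le
  rw [← hcard]
  exact sre_eq_card_pow_of_existsUnique (fun x hx => hU.existsUnique_prefix_drop_linz hk hkU hx) hk

/-- for the linearization `w_lin` of (a rotation of) a σ-ary
de Bruijn sequence of order k ≥ 1 (σ ≥ 2), the number of super-maximal
extensions of `w_lin` is `sre(w_lin) = σ^k`. -/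
theorem deBruijn_sre {α : Type*} [Fintype α] [LinearOrder α]
    (σ : ℕ) (hσ : 2 ≤ σ) (hcard : Fintype.card α = σ)
    (k : ℕ) (hk : 1 ≤ k)
    (C : List α) (hC : IsDeBruijn k C) (c : ℕ) :
    sre (linz k (C.rotate c)) = σ ^ k :=
  deBruijn_sre_general σ hσ hcard k hk C hC c
end

section
/- Let Σ be an ordered alphabet of size σ ≥ 2, let k ≥ 2, and let w_lin be the linearization of (a rotation of) a σ-ary de Bruijn sequence of order k. Then the ratio between the size χ of a smallest suffixient set of w_lin $ and the number r of runs in BWT(w_lin $) satisfies χ/r ≤ (σ^k + 1)/(σ^{k-1}(σ − 1) + 1) < σ/(σ − 1). In particular, for σ ≥ 3 linearized and terminated de Bruijn sequences never reach ratio 3/2, so they cannot approach the bound χ ≤ 2r. -/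
/-!
Every word of length `k` occurs in `w = w_lin`, and `w` has exactly `σ^k` windows of length `k`,
so each occurs exactly once. A super-maximal extension of `w$` either contains `$`, and then it is
a suffix of `w$` (of these at most one is super-maximal), or it is `x a` with `x` right-maximal:
`x` cannot have length `≥ k` (it would occur only once) nor `< k - 1` (prepending a letter gives a
longer right-extension), so `x a` is one of the `σ^k` words of length `k`. Hence `χ ≤ σ^k + 1`.

For `r`, label each rotation of `w$` by its prefix of length `k - 1` and its last letter. All `σ^k`
labels `(p, c)` with `p ∈ Σ^(k-1)` occur, and every other prefix occurs with at least one letter,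
so there are at least `σ^k - σ^(k-1)` more labels than prefixes. Along the sorted rotations the
prefixes are sorted, so they change fewer times than there are prefixes, while every change of
label is a change of prefix or of BWT letter. Hence `r ≥ σ^k - σ^(k-1) + 1`.
-/

namespace List

variable {α β : Type*}

theorem card_toFinset_le_length_destutter [DecidableEq α] (l : List α) :
    l.toFinset.card ≤ (l.destutter (· ≠ ·)).length := by
  rw [card_toFinset]
  exact (nodup_dedup l).isChain.length_le_length_destutter (dedup_sublist l)

theorem length_destutter_le_card_toFinset [PartialOrder α] [DecidableEq α] {l : List α}
    (hl : l.Pairwise (· ≤ ·)) : (l.destutter (· ≠ ·)).length ≤ l.toFinset.card := by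
  have hsub := destutter_sublist (· ≠ ·) l
  have hlt : (l.destutter (· ≠ ·)).Pairwise (· < ·) := by
    have hle := (hl.sublist hsub).isChain
    have hne := isChain_destutter (· ≠ ·) l
    exact isChain_iff_pairwise.mp <| isChain_iff_getElem.mpr fun i hi =>
      lt_of_le_of_ne (hle.getElem i hi) (hne.getElem i hi)
  rw [← toFinset_card_of_nodup (hlt.imp ne_of_lt)]
  exact Finset.card_le_card fun a ha => mem_toFinset.mpr (hsub.subset (mem_toFinset.mp ha))

theorem length_destutter'_cons_ne [DecidableEq α] (l : List α) (a b : α) :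
    ((b :: l).destutter' (· ≠ ·) a).length =
      (l.destutter' (· ≠ ·) b).length + if a = b then 0 else 1 := by
  by_cases h : a = b <;> simp [h]

theorem length_destutter'_add_one_le [DecidableEq α] [DecidableEq β] (l : List (α × β))
    (p : α × β) :
    (l.destutter' (· ≠ ·) p).length + 1 ≤
      ((l.map Prod.fst).destutter' (· ≠ ·) p.1).length +
        ((l.map Prod.snd).destutter' (· ≠ ·) p.2).length := by
  induction l generalizing p with
  | nil => simp
  | cons q l ih =>
    have := ih q
    simp only [map_cons, length_destutter'_cons_ne]
    have hpq : p = q ↔ p.1 = q.1 ∧ p.2 = q.2 := Prod.ext_iff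
    by_cases h₁ : p.1 = q.1 <;> by_cases h₂ : p.2 = q.2 <;>
      simp only [hpq, h₁, h₂, and_self, and_false, false_and, ↓reduceIte] <;> omega

theorem length_destutter_add_one_le [DecidableEq α] [DecidableEq β] {l : List (α × β)}
    (hl : l ≠ []) :
    (l.destutter (· ≠ ·)).length + 1 ≤
      ((l.map Prod.fst).destutter (· ≠ ·)).length +
        ((l.map Prod.snd).destutter (· ≠ ·)).length := by
  obtain ⟨p, l, rfl⟩ := exists_cons_of_ne_nil hl
  simpa only [map_cons, destutter_cons'] using length_destutter'_add_one_le l p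

theorem card_toFinset_add_one_le [PartialOrder α] [DecidableEq α] [DecidableEq β]
    {l : List (α × β)} (hl : l ≠ []) (hsorted : (l.map Prod.fst).Pairwise (· ≤ ·)) :
    l.toFinset.card + 1 ≤
      (l.map Prod.fst).toFinset.card + ((l.map Prod.snd).destutter (· ≠ ·)).length := by
  have := card_toFinset_le_length_destutter l
  have := length_destutter_add_one_le hl
  have := length_destutter_le_card_toFinset hsorted
  omega

theorem Lex.of_take {r : α → α → Prop} :
    ∀ {x y : List α} {m : ℕ}, Lex r (x.take m) (y.take m) → Lex r x y
  | [], _ :: _, _, _ => Lex.nil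
  | _ :: _, _ :: _, m + 1, h => by
    rw [take_succ_cons, take_succ_cons, cons_lex_cons_iff] at h
    rcases h with h | ⟨rfl, h⟩
    · exact Lex.rel h
    · exact Lex.cons (Lex.of_take h)
  | [], [], _, h | _ :: _, [], _, h | _ :: _, _ :: _, 0, h => by simp at h

theorem take_le_take_of_le [LinearOrder α] {x y : List α} (m : ℕ) (h : x ≤ y) :
    x.take m ≤ y.take m :=
  not_lt.mp fun hlt => not_lt.mpr h (Lex.of_take hlt)

end List

theorem Finset.card_mul_card_add_card_image_fst_le {α β : Type*} [DecidableEq α] [DecidableEq β]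
    {G : Finset α} {H : Finset β} {P : Finset (α × β)} (h : G ×ˢ H ⊆ P) :
    G.card * H.card + (P.image Prod.fst).card ≤ P.card + G.card := by
  set Q := P.filter fun p => p.1 ∉ G
  have hQ : G.card * H.card + Q.card ≤ P.card := by
    rw [← card_product, ← card_union_of_disjoint]
    · exact card_le_card (union_subset h (filter_subset _ _))
    · exact disjoint_left.mpr fun p hp hq => (mem_filter.mp hq).2 (mem_product.mp hp).1
  have hK : (P.image Prod.fst).card ≤ G.card + Q.card := calc
    _ ≤ (G ∪ Q.image Prod.fst).card := by
      refine card_le_card fun a ha => ?_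
      obtain ⟨p, hp, rfl⟩ := mem_image.mp ha
      by_cases hpG : p.1 ∈ G
      · exact mem_union_left _ hpG
      · exact mem_union_right _ (mem_image_of_mem _ (mem_filter.mpr ⟨hp, hpG⟩))
    _ ≤ G.card + (Q.image Prod.fst).card := card_union_le _ _
    _ ≤ G.card + Q.card := Nat.add_le_add_left card_image_le _
  omega

-- The coercion in `term` elaborates through the list monad, not as a `map`.
theorem term_eq {α : Type*} (w : List α) : term w = w.map WithBot.some ++ [⊥] := by
  simp [term, List.map_eq_flatMap]

section BWT

open List

variable {α : Type*}

def sortedRotations [LinearOrder α] (v : List α) : List (List α) :=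
  insertionSort (· ≤ ·) ((range v.length).map fun i => v.rotate i)

theorem bwtL_eq_filterMap [LinearOrder α] (v : List α) :
    bwtL v = (sortedRotations v).filterMap getLast? :=
  rfl

theorem length_of_mem_sortedRotations [LinearOrder α] {v ρ : List α}
    (h : ρ ∈ sortedRotations v) : ρ.length = v.length := by
  obtain ⟨i, -, rfl⟩ := mem_map.mp ((perm_insertionSort _ _).mem_iff.mp h)
  exact length_rotate _ _

theorem append_mem_sortedRotations [LinearOrder α] (a : List α) {b : List α} (hb : b ≠ []) :
    b ++ a ∈ sortedRotations (a ++ b) := by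
  refine (perm_insertionSort _ _).mem_iff.mpr
    (mem_map.mpr ⟨a.length, ?_, rotate_append_length_eq a b⟩)
  simpa [mem_range] using length_pos_iff.mpr hb

theorem filterMap_getLast?_eq_map_getLastD {L : List (List α)} (hL : ∀ ρ ∈ L, ρ ≠ [])
    (d : α) :
    L.filterMap getLast? = L.map (·.getLastD d) := by
  rw [← filterMap_eq_map']
  refine filterMap_congr fun ρ hρ => ?_
  simp [getLast?_eq_some_getLast (hL ρ hρ)]

theorem le_runsCount_bwtL_term_add [Fintype α] [LinearOrder α] (w : List α) (n : ℕ)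
    (hall : ∀ u : List α, u.length = n + 1 → u <:+: w) :
    Fintype.card α ^ (n + 1) + 1 ≤ runsCount (bwtL (term w)) + Fintype.card α ^ n := by
  set R := sortedRotations (term w)
  set l := R.map fun ρ => (ρ.take n, ρ.getLastD ⊥)
  have hR : ∀ ρ ∈ R, ρ ≠ [] := fun ρ hρ =>
    ne_nil_of_length_pos (by simp [length_of_mem_sortedRotations hρ, term_eq])
  have hbwt : bwtL (term w) = l.map Prod.snd := by
    rw [bwtL_eq_filterMap, filterMap_getLast?_eq_map_getLastD hR ⊥, map_map]
    rfl
  have hl : l ≠ [] := by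
    simp [l, R, sortedRotations, ← length_pos_iff, term_eq]
  have hsorted : (l.map Prod.fst).Pairwise (· ≤ ·) := by
    rw [map_map]
    exact (pairwise_insertionSort _ _).map _ fun _ _ => take_le_take_of_le n
  set G : Finset (List (WithBot α)) :=
    Finset.univ.image fun u : List.Vector α n => u.toList.map WithBot.some
  set H : Finset (WithBot α) := Finset.univ.image WithBot.some
  have hGH : G ×ˢ H ⊆ l.toFinset := by
    rintro ⟨p, c⟩ hpc
    obtain ⟨hp, hc⟩ := Finset.mem_product.mp hpc
    obtain ⟨u, -, rfl⟩ := Finset.mem_image.mp hp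
    obtain ⟨c, -, rfl⟩ := Finset.mem_image.mp hc
    obtain ⟨s, t, hst⟩ := hall (c :: u.toList) (by simp)
    have hv : term w = (s.map WithBot.some ++ [WithBot.some c]) ++
        (u.toList.map WithBot.some ++ t.map WithBot.some ++ [⊥]) := by
      simp [term_eq, ← hst]
    have hmem := append_mem_sortedRotations (s.map WithBot.some ++ [WithBot.some c])
      (b := u.toList.map WithBot.some ++ t.map WithBot.some ++ [⊥]) (by simp)
    rw [← hv] at hmem
    refine mem_toFinset.mpr (mem_map.mpr ⟨_, hmem, ?_⟩)
    simp only [← append_assoc, getLastD_concat, Prod.mk.injEq, and_true]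
    simp
  have hcount := Finset.card_mul_card_add_card_image_fst_le hGH
  have hruns := card_toFinset_add_one_le hl hsorted
  have hkeys : (l.map Prod.fst).toFinset = l.toFinset.image Prod.fst := by
    ext; simp
  have hG : G.card = Fintype.card α ^ n := by
    have hinj : Function.Injective fun u : List.Vector α n => u.toList.map WithBot.some :=
      (map_injective_iff.mpr WithBot.coe_injective).comp List.Vector.toList_injective
    rw [Finset.card_image_of_injective _ hinj, Finset.card_univ, card_vector]
  have hH : H.card = Fintype.card α := by
    rw [Finset.card_image_of_injective _ WithBot.coe_injective, Finset.card_univ]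
  rw [runsCount, hbwt, pow_succ]
  rw [hkeys] at hruns
  rw [hG, hH] at hcount
  omega

end BWT

section SuperMaximal

open List

variable {α β : Type*}

def OccursAtMostOnce (u w : List α) : Prop :=
  ∀ s₁ s₂, s₁ ++ u <+: w → s₂ ++ u <+: w → s₁ = s₂

theorem OccursAtMostOnce.append_right {u w : List α} (h : OccursAtMostOnce u w) (u' : List α) :
    OccursAtMostOnce (u ++ u') w := fun s₁ s₂ h₁ h₂ =>
  h s₁ s₂ ((prefix_append _ u').trans (by rwa [append_assoc]))
    ((prefix_append _ u').trans (by rwa [append_assoc]))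

theorem OccursAtMostOnce.map {f : α → β} (hf : Function.Injective f) {u w : List α}
    (h : OccursAtMostOnce u w) : OccursAtMostOnce (u.map f) (w.map f) := by
  have lift : ∀ s, s ++ u.map f <+: w.map f → ∃ s', s = s'.map f ∧ s' ++ u <+: w := by
    intro s hs
    obtain ⟨l, hl, hsl⟩ := prefix_map_iff.mp hs
    obtain ⟨s', u', rfl, rfl, hu'⟩ := map_eq_append_iff.mp hsl.symm
    exact ⟨s', rfl, by rwa [(map_injective_iff.mpr hf) hu'] at hl⟩
  intro s₁ s₂ h₁ h₂
  obtain ⟨s₁', rfl, h₁'⟩ := lift s₁ h₁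
  obtain ⟨s₂', rfl, h₂'⟩ := lift s₂ h₂
  rw [h s₁' s₂' h₁' h₂']

theorem OccursAtMostOnce.eq_of_isInfix_concat {x l : List α} {a b e : α}
    (h : OccursAtMostOnce x l) (ha : x ++ [a] <:+: l ++ [e]) (hb : x ++ [b] <:+: l ++ [e]) :
    a = b := by
  have occurrence : ∀ {c s t}, s ++ (x ++ [c]) ++ t = l ++ [e] → s ++ x <+: l := by
    intro c s t hst
    refine ⟨(c :: t).dropLast, ?_⟩
    simpa [dropLast_append_of_ne_nil] using congrArg dropLast hst
  obtain ⟨s₁, t₁, h₁⟩ := ha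
  obtain ⟨s₂, t₂, h₂⟩ := hb
  obtain rfl := h s₁ s₂ (occurrence h₁) (occurrence h₂)
  exact (by simpa using h₁.trans h₂.symm : a = b ∧ t₁ = t₂).1

theorem isSuffix_of_isInfix_concat_of_mem {y l : List α} {e : α} (hy : y <:+: l ++ [e])
    (hey : e ∈ y) (hel : e ∉ l) : y <:+ l ++ [e] :=
  (infix_concat_iff.mp hy).resolve_right fun h => hel (h.subset hey)

theorem isInfix_of_isInfix_concat_of_not_mem {y l : List α} {e : α} (hy : y <:+: l ++ [e])
    (hey : e ∉ y) : y <:+: l := by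
  rcases infix_concat_iff.mp hy with h | h
  · obtain rfl | ⟨t, rfl, -⟩ := suffix_concat_iff.mp h
    · exact nil_infix
    · simp at hey
  · exact h

theorem setOf_superMax_isSuffix_subsingleton (v : List α) :
    {y | SuperMax v y ∧ y <:+ v}.Subsingleton := by
  rintro y ⟨hy, hyv⟩ z ⟨hz, hzv⟩
  rcases suffix_or_suffix_of_suffix hyv hzv with h | h
  · exact (hy.2 z hz.1 h).symm
  · exact hz.2 y hy.1 h

theorem isInfix_of_length_le [Nonempty α] {w : List α} {k : ℕ}
    (hall : ∀ u : List α, u.length = k → u <:+: w) {u : List α} (hu : u.length ≤ k) :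
    u <:+: w :=
  (prefix_append u (replicate (k - u.length) (Classical.arbitrary α))).isInfix.trans
    (hall _ (by simp; omega))

variable [Nontrivial α] {w : List α} {k : ℕ}

theorem SuperMax.exists_eq_map_of_bot_not_mem
    (hall : ∀ u : List α, u.length = k → u <:+: w)
    (huniq : ∀ u : List α, u.length = k → OccursAtMostOnce u w)
    {y : List (WithBot α)} (hy : SuperMax (term w) y) (hbot : ⊥ ∉ y) :
    ∃ u : List α, u.length = k ∧ y = u.map WithBot.some := by
  obtain ⟨⟨x, a, b, rfl, hab, hxa, hxb⟩, hmax⟩ := hy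
  rw [term_eq] at hxa hxb hmax
  obtain ⟨u, -, hu⟩ := infix_map_iff.mp (isInfix_of_isInfix_concat_of_not_mem hxa hbot)
  obtain ⟨ux, ua, rfl, rfl, hua⟩ := map_eq_append_iff.mp hu.symm
  obtain ⟨a', rfl, rfl⟩ := map_eq_singleton_iff.mp hua
  have isInfix_term : ∀ z : List α, z.length ≤ k →
      z.map WithBot.some <:+: w.map WithBot.some ++ [⊥] := fun z hz =>
    ((isInfix_of_length_le hall hz).map _).trans infix_append_left
  -- A context of length `≥ k` occurs only once, so only one letter can follow it.
  have not_long : ¬ k ≤ ux.length := by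
    intro hk
    have hx : OccursAtMostOnce (ux.map WithBot.some) (w.map WithBot.some) := by
      rw [← take_append_drop k ux]
      exact ((huniq _ (by simp; omega)).append_right _).map WithBot.coe_injective
    exact hab (hx.eq_of_isInfix_concat hxa hxb)
  -- A context shorter than `k - 1` extends to the left, so `x ++ [a]` is not super-maximal.
  have not_short : ¬ ux.length + 1 < k := by
    intro hk
    obtain ⟨a₀⟩ : Nonempty α := inferInstance
    obtain ⟨b', hb'⟩ := exists_ne a'
    have hext : RightExt (w.map WithBot.some ++ [⊥])
        (WithBot.some a₀ :: (ux.map WithBot.some ++ [WithBot.some a'])) :=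
      ⟨WithBot.some a₀ :: ux.map WithBot.some, _, WithBot.some b', rfl,
        fun h => hb' (WithBot.coe_injective h).symm,
        by simpa using isInfix_term (a₀ :: ux ++ [a']) (by simp; omega),
        by simpa using isInfix_term (a₀ :: ux ++ [b']) (by simp; omega)⟩
    simpa using congrArg length (hmax _ hext (suffix_cons _ _))
  exact ⟨ux ++ [a'], by simp; omega, by simp⟩

theorem chi_le_card_pow_add_one [Fintype α]
    (hall : ∀ u : List α, u.length = k → u <:+: w)
    (huniq : ∀ u : List α, u.length = k → OccursAtMostOnce u w) :
    chi w ≤ Fintype.card α ^ k + 1 := by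
  set words := {u : List α | u.length = k}
  have hwords : words.ncard = Fintype.card α ^ k := by
    rw [← Nat.card_coe_set_eq, ← card_vector, ← Nat.card_eq_fintype_card]
    rfl
  have hsub : {y | SuperMax (term w) y} ⊆
      {y | SuperMax (term w) y ∧ y <:+ term w} ∪ (map WithBot.some '' words) := by
    intro y hy
    by_cases hbot : ⊥ ∈ y
    · obtain ⟨x, a, b, rfl, -, hxa, -⟩ := hy.1
      rw [term_eq] at hxa ⊢
      refine Or.inl ⟨by rwa [term_eq] at hy, ?_⟩
      exact isSuffix_of_isInfix_concat_of_mem hxa hbot (by simp)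
    · obtain ⟨u, hu, rfl⟩ := hy.exists_eq_map_of_bot_not_mem hall huniq hbot
      exact Or.inr ⟨u, hu, rfl⟩
  have hfin := (setOf_superMax_isSuffix_subsingleton (term w)).finite.union
    ((finite_length_eq α k).image (map WithBot.some))
  calc chi w ≤ _ := Set.ncard_le_ncard hsub hfin
    _ ≤ _ := Set.ncard_union_le _ _
    _ ≤ 1 + Fintype.card α ^ k := add_le_add
        ((Set.ncard_le_one (setOf_superMax_isSuffix_subsingleton _).finite).mpr
          fun _ ha _ hb => setOf_superMax_isSuffix_subsingleton _ ha hb)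
        ((Set.ncard_image_le (finite_length_eq α k)).trans hwords.le)
    _ = Fintype.card α ^ k + 1 := add_comm _ _

end SuperMaximal

section DeBruijn

open List

variable {α : Type*}

theorem occursAtMostOnce_of_forall_isInfix [Fintype α] {w : List α} {k : ℕ}
    (hlen : w.length + 1 = Fintype.card α ^ k + k)
    (hall : ∀ u : List α, u.length = k → u <:+: w) {u : List α} (hu : u.length = k) :
    OccursAtMostOnce u w := by
  have window : ∀ {s u t : List α}, ((s ++ u ++ t).drop s.length).take u.length = u := by
    simp
  -- `w` has exactly `card α ^ k` windows of length `k` and every word of length `k` is one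
  -- of them, so no word is two of them.
  let f : Fin (Fintype.card α ^ k) → List.Vector α k :=
    fun j => ⟨(w.drop j).take k, by simp; omega⟩
  have hsurj : Function.Surjective f := by
    rintro ⟨v, hv⟩
    obtain ⟨s, t, rfl⟩ := hall v hv
    refine ⟨⟨s.length, by simp at hlen; omega⟩, Subtype.ext ?_⟩
    simp [f, ← hv]
  have hinj : Function.Injective f :=
    (Finite.injective_iff_surjective_of_equiv
      (Fintype.equivOfCardEq (by simp [card_vector]))).mpr hsurj
  rintro s₁ s₂ ⟨t₁, rfl⟩ ⟨t₂, h⟩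
  have hs₁ : s₁.length < Fintype.card α ^ k := by simp at hlen; omega
  have hs₂ : s₂.length < Fintype.card α ^ k := by rw [← h] at hlen; simp at hlen; omega
  have hpos := congrArg Fin.val (@hinj ⟨_, hs₁⟩ ⟨_, hs₂⟩ (Subtype.ext (by
    simp only [f, ← hu]; rw [window, ← h, window])))
  exact (append_inj (by simpa [append_assoc] using h.symm) hpos).1

theorem take_rotate_isInfix_linz {U : List α} {k : ℕ} (hk : k ≤ U.length) (j : ℕ) :
    (U.rotate j).take k <:+: linz k U := by
  rcases eq_or_ne U [] with rfl | hU
  · simp_all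
  rw [← rotate_mod]
  have hj : j % U.length < U.length := Nat.mod_lt _ (length_pos_iff.mpr hU)
  have hwindow :
      (U.rotate (j % U.length)).take k = ((linz k U).drop (j % U.length)).take k := by
    rw [rotate_eq_drop_append_take hj.le, linz, drop_append_of_le_length hj.le, take_append,
      take_append, take_take, take_take, length_drop]
    congr 2
    omega
  rw [hwindow]
  exact (take_prefix _ _).isInfix.trans (drop_suffix _ _).isInfix

theorem IsDeBruijn.isInfix_linz [Fintype α] {k : ℕ} {C : List α} (hC : IsDeBruijn k C) (c : ℕ)
    {u : List α} (hu : u.length = k) : u <:+: linz k (C.rotate c) := by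
  obtain ⟨i, ⟨-, rfl⟩, -⟩ := hC.2 u hu
  obtain ⟨j, hj⟩ : C.rotate c ~r C.rotate i :=
    (IsRotated.forall C c).trans (IsRotated.forall C i).symm
  rw [← hj]
  exact take_rotate_isInfix_linz (by simpa using hu.ge) j

theorem length_linz {U : List α} {k : ℕ} (hk : k ≤ U.length + 1) :
    (linz k U).length = U.length + (k - 1) := by
  simp [linz]
  omega

end DeBruijn

theorem cast_div_le_of_le_of_le_add {σ n χ r : ℕ} (hσ : 1 ≤ σ)
    (hχ : χ ≤ σ ^ (n + 1) + 1) (hr : σ ^ (n + 1) + 1 ≤ r + σ ^ n) :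
    (χ : ℝ) / r ≤ ((σ : ℝ) ^ (n + 1) + 1) / ((σ : ℝ) ^ n * ((σ : ℝ) - 1) + 1) := by
  have hσ' : (1 : ℝ) ≤ σ := by exact_mod_cast hσ
  have hden : (0 : ℝ) < (σ : ℝ) ^ n * ((σ : ℝ) - 1) + 1 := by
    have := pow_nonneg (zero_le_one.trans hσ') n
    nlinarith
  have hr' : (σ : ℝ) ^ n * ((σ : ℝ) - 1) + 1 ≤ r := by
    have : ((σ ^ (n + 1) + 1 : ℕ) : ℝ) ≤ (r + σ ^ n : ℕ) := by exact_mod_cast hr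
    push_cast at this
    rw [pow_succ] at this
    linarith
  exact div_le_div₀ (by positivity) (by exact_mod_cast hχ) hden hr'

theorem pow_succ_add_one_div_lt_div_sub_one {σ : ℝ} (hσ : 1 < σ) (n : ℕ) :
    (σ ^ (n + 1) + 1) / (σ ^ n * (σ - 1) + 1) < σ / (σ - 1) := by
  have hpos := pow_pos (zero_lt_one.trans hσ) n
  rw [div_lt_div_iff₀ (by nlinarith) (by linarith), pow_succ]
  nlinarith

/-- for the linearization `w_lin` of (a rotation of) a σ-ary
de Bruijn sequence of order k ≥ 2 (σ ≥ 2), the ratio between χ(w_lin $) and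
the number r of runs of `BWT(w_lin $)` satisfies
`χ/r ≤ (σ^k + 1)/(σ^{k-1}(σ − 1) + 1) < σ/(σ − 1)`; in particular, for
σ ≥ 3 the ratio never reaches 3/2. -/
theorem deBruijn_ratio {α : Type*} [Fintype α] [LinearOrder α]
    (σ : ℕ) (hσ : 2 ≤ σ) (hcard : Fintype.card α = σ)
    (k : ℕ) (hk : 2 ≤ k)
    (C : List α) (hC : IsDeBruijn k C) (c : ℕ)
    (wlin : List α) (hw : wlin = linz k (C.rotate c)) :
    (chi wlin : ℝ) / (runsCount (bwtL (term wlin)) : ℝ) ≤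
        ((σ : ℝ) ^ k + 1) / ((σ : ℝ) ^ (k - 1) * ((σ : ℝ) - 1) + 1) ∧
    ((σ : ℝ) ^ k + 1) / ((σ : ℝ) ^ (k - 1) * ((σ : ℝ) - 1) + 1) <
        (σ : ℝ) / ((σ : ℝ) - 1) ∧
    (3 ≤ σ →
      (chi wlin : ℝ) / (runsCount (bwtL (term wlin)) : ℝ) < 3 / 2) := by
  obtain ⟨n, rfl⟩ : ∃ n, k = n + 1 := ⟨k - 1, by omega⟩
  subst hw hcard
  have : Nontrivial α := Fintype.one_lt_card_iff_nontrivial.mp hσ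
  have hall : ∀ u : List α, u.length = n + 1 → u <:+: linz (n + 1) (C.rotate c) :=
    fun u hu => hC.isInfix_linz c hu
  have hlen : (linz (n + 1) (C.rotate c)).length + 1 = Fintype.card α ^ (n + 1) + (n + 1) := by
    have := (Nat.lt_pow_self (n := n + 1) hσ).le
    rw [length_linz (by simp [hC.1]; omega), List.length_rotate, hC.1]
    omega
  have hχ := chi_le_card_pow_add_one hall fun u hu =>
    occursAtMostOnce_of_forall_isInfix hlen hall hu
  have hr := le_runsCount_bwtL_term_add _ n hall
  have hratio := cast_div_le_of_le_of_le_add (by omega) hχ hr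
  have hσ' : (1 : ℝ) < Fintype.card α := by exact_mod_cast hσ
  have hbound := pow_succ_add_one_div_lt_div_sub_one hσ' n
  rw [Nat.add_sub_cancel]
  refine ⟨hratio, hbound, fun h3 => hratio.trans_lt (hbound.trans_le ?_)⟩
  have h3' : (3 : ℝ) ≤ Fintype.card α := by exact_mod_cast h3
  rw [div_le_div_iff₀ (by linarith) (by norm_num)]
  linarith
end
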